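/- Let K be algebraically closed and I = (f_1, …, f_r) ⊴ K[x]. Suppose for each 1 ≤ i ≤ r that h_i ∈ K[x] and l_i ∈ ℕ satisfy det(v)^{l_i} · f_i(v⁻¹) = h_i(v) for all v ∈ GL(n, K). Then V*(I) is closed under inversion (v ∈ V*(I) implies v⁻¹ ∈ V*(I)) if and only if h_i ∈ √Î (the radical of Î in K[x̂]) for every 1 ≤ i ≤ r, where h_i is regarded as an element of K[x̂] via the inclusion K[x] ⊆ K[x̂]. -/

import Mathlib

open MvPolynomial

/-- Evaluation of a polynomial in the `n²` indeterminates at an `n × n` matrix. -/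
noncomputable def matEval {n : ℕ} {K : Type*} [Field K] (v : Matrix (Fin n) (Fin n) K) :
    MvPolynomial (Fin n × Fin n) K →+* K :=
  MvPolynomial.eval (fun p => v p.1 p.2)

/-- `V(I)`: the matrices annihilating every polynomial of `I`. -/
def Vset {n : ℕ} {K : Type*} [Field K] (I : Ideal (MvPolynomial (Fin n × Fin n) K)) :
    Set (Matrix (Fin n) (Fin n) K) :=
  {v | ∀ f ∈ I, matEval v f = 0}

/-- `V*(I) = V(I) ∩ GL(n,K)`: the invertible matrices in `V(I)`. -/
def Vstar {n : ℕ} {K : Type*} [Field K] (I : Ideal (MvPolynomial (Fin n × Fin n) K)) :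
    Set (Matrix (Fin n) (Fin n) K) :=
  {v | v ∈ Vset I ∧ IsUnit v}

/-- `det(x)`, the determinant of the matrix of indeterminates. -/
noncomputable def detPoly (n : ℕ) (K : Type*) [Field K] : MvPolynomial (Fin n × Fin n) K :=
  (Matrix.of fun i j => MvPolynomial.X (i, j)).det

/-- `f₀ = x₀ · det(x) − 1 ∈ K[x̂]`, where `x₀` is the extra indeterminate `none`. -/
noncomputable def fzero (n : ℕ) (K : Type*) [Field K] :
    MvPolynomial (Option (Fin n × Fin n)) K :=
  MvPolynomial.X none * MvPolynomial.rename some (detPoly n K) - 1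

/-- `Î = I·K[x̂] + (f₀)`. -/
noncomputable def Ihat {n : ℕ} {K : Type*} [Field K]
    (I : Ideal (MvPolynomial (Fin n × Fin n) K)) :
    Ideal (MvPolynomial (Option (Fin n × Fin n)) K) :=
  Ideal.map (MvPolynomial.rename (some : Fin n × Fin n → Option (Fin n × Fin n))) I
    ⊔ Ideal.span {fzero n K}

/-- Evaluation of a polynomial in `K[x̂]` at a pair `(v₀, v) ∈ K ⊕ K^{n×n}`. -/
noncomputable def hatEval {n : ℕ} {K : Type*} [Field K] (v₀ : K)
    (v : Matrix (Fin n) (Fin n) K) :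
    MvPolynomial (Option (Fin n × Fin n)) K →+* K :=
  MvPolynomial.eval (fun o : Option (Fin n × Fin n) => o.elim v₀ (fun p => v p.1 p.2))

/-- `V(Ĵ) ⊆ K ⊕ K^{n×n}` for an ideal `Ĵ ⊴ K[x̂]`. -/
def VhatSet {n : ℕ} {K : Type*} [Field K]
    (J : Ideal (MvPolynomial (Option (Fin n × Fin n)) K)) :
    Set (K × Matrix (Fin n) (Fin n) K) :=
  {p | ∀ f ∈ J, hatEval p.1 p.2 f = 0}

/-! By the Nullstellensatz, `h ∈ √Î` means that `h` vanishes on the zero locus of `Î`. The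
equation `x₀ · det(x) = 1` (Rabinowitsch's trick) makes that zero locus a copy of `V*(I)`, so
`h ∈ √Î` iff `h` vanishes on `V*(I)`. Finally, since `det(v)^{lᵢ} fᵢ(v⁻¹) = hᵢ(v)` with
`det(v) ≠ 0`, the `hᵢ` all vanish on `V*(I)` iff every `v ∈ V*(I)` has `v⁻¹ ∈ V(I)`. -/

section

variable {n : ℕ} {K : Type*} [Field K]

lemma matEval_detPoly (v : Matrix (Fin n) (Fin n) K) : matEval v (detPoly n K) = v.det := by
  rw [matEval, detPoly, RingHom.map_det]
  congr 1
  ext i j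
  simp

lemma mem_Vset_span_iff (S : Set (MvPolynomial (Fin n × Fin n) K))
    (v : Matrix (Fin n) (Fin n) K) :
    v ∈ Vset (Ideal.span S) ↔ ∀ g ∈ S, matEval v g = 0 := by
  change Ideal.span S ≤ RingHom.ker (matEval v) ↔ _
  rw [Ideal.span_le]
  rfl

def ptMat (x : Option (Fin n × Fin n) → K) : Matrix (Fin n) (Fin n) K :=
  Matrix.of fun i j => x (some (i, j))

lemma aeval_rename_some (x : Option (Fin n × Fin n) → K) (g : MvPolynomial (Fin n × Fin n) K) :
    aeval x (rename some g) = matEval (ptMat x) g := by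
  rw [aeval_rename]
  rfl

lemma mem_zeroLocus_Ihat_iff (I : Ideal (MvPolynomial (Fin n × Fin n) K))
    (x : Option (Fin n × Fin n) → K) :
    x ∈ zeroLocus K (Ihat I) ↔ ptMat x ∈ Vset I ∧ x none * (ptMat x).det = 1 := by
  change Ihat I ≤ RingHom.ker (aeval x) ↔ _
  have hfzero : aeval x (fzero n K) = x none * (ptMat x).det - 1 := by
    rw [fzero, map_sub, map_mul, map_one, aeval_X, aeval_rename_some, matEval_detPoly]
  rw [Ihat, sup_le_iff, Ideal.map_le_iff_le_comap, Ideal.span_le, Set.singleton_subset_iff,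
    SetLike.mem_coe, RingHom.mem_ker, hfzero, sub_eq_zero]
  refine and_congr_left' (forall₂_congr fun g _ => ?_)
  rw [Ideal.mem_comap, RingHom.mem_ker, aeval_rename_some]

theorem rename_mem_radical_Ihat_iff [IsAlgClosed K] (I : Ideal (MvPolynomial (Fin n × Fin n) K))
    (g : MvPolynomial (Fin n × Fin n) K) :
    rename some g ∈ (Ihat I).radical ↔ ∀ v ∈ Vstar I, matEval v g = 0 := by
  rw [← vanishingIdeal_zeroLocus_eq_radical (K := K), mem_vanishingIdeal_iff]
  constructor
  · rintro hg v ⟨hvI, hv⟩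
    have hdet : v.det ≠ 0 := ((Matrix.isUnit_iff_isUnit_det v).1 hv).ne_zero
    have hx := hg (fun o => o.elim v.det⁻¹ fun p => v p.1 p.2)
      ((mem_zeroLocus_Ihat_iff I _).2 ⟨hvI, inv_mul_cancel₀ hdet⟩)
    rwa [aeval_rename_some] at hx
  · intro hg x hx
    obtain ⟨hxI, hdet⟩ := (mem_zeroLocus_Ihat_iff I x).1 hx
    rw [aeval_rename_some]
    exact hg _ ⟨hxI, (Matrix.isUnit_iff_isUnit_det _).2 (IsUnit.of_mul_eq_one_right _ hdet)⟩

lemma inv_mem_Vstar_span_range_iff {r : ℕ} (f : Fin r → MvPolynomial (Fin n × Fin n) K)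
    {v : Matrix (Fin n) (Fin n) K} (hv : IsUnit v) :
    v⁻¹ ∈ Vstar (Ideal.span (Set.range f)) ↔ ∀ i, matEval v⁻¹ (f i) = 0 := by
  rw [Vstar, Set.mem_ofPred_eq, mem_Vset_span_iff, Set.forall_mem_range,
    Matrix.isUnit_nonsing_inv_iff, and_iff_left hv]

end

theorem stmt9_general {n : ℕ} {K : Type*} [Field K] [IsAlgClosed K]
    (r : ℕ) (f h : Fin r → MvPolynomial (Fin n × Fin n) K) (l : Fin r → ℕ)
    (I : Ideal (MvPolynomial (Fin n × Fin n) K)) (hI : I = Ideal.span (Set.range f))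
    (hfh : ∀ i : Fin r, ∀ v : Matrix (Fin n) (Fin n) K, IsUnit v →
      v.det ^ l i * matEval v⁻¹ (f i) = matEval v (h i)) :
    (∀ v ∈ Vstar I, v⁻¹ ∈ Vstar I) ↔
      (∀ i : Fin r,
        MvPolynomial.rename (some : Fin n × Fin n → Option (Fin n × Fin n)) (h i) ∈
          (Ihat I).radical) := by
  have hinv : ∀ v ∈ Vstar I, v⁻¹ ∈ Vstar I ↔ ∀ i, matEval v (h i) = 0 := by
    rintro v ⟨-, hv⟩
    have hdet : v.det ≠ 0 := ((Matrix.isUnit_iff_isUnit_det v).1 hv).ne_zero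
    rw [hI, inv_mem_Vstar_span_range_iff f hv]
    refine forall_congr' fun i => ?_
    rw [← hfh i v hv, mul_eq_zero, or_iff_right (pow_ne_zero _ hdet)]
  simp_rw [rename_mem_radical_Ihat_iff, forall₂_congr hinv]
  exact ⟨fun H i v hv => H v hv i, fun H v hv i => H i v hv⟩

/-- `V*(I)` is closed under inversion iff `hᵢ ∈ √Î` for every `i`
(with `hᵢ` regarded in `K[x̂]` via `K[x] ⊆ K[x̂]`), where
`det(v)^{lᵢ} · fᵢ(v⁻¹) = hᵢ(v)` for all invertible `v`. -/
theorem stmt9 {n : ℕ} (hn : 1 ≤ n) {K : Type*} [Field K] [IsAlgClosed K]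
    (r : ℕ) (f h : Fin r → MvPolynomial (Fin n × Fin n) K) (l : Fin r → ℕ)
    (I : Ideal (MvPolynomial (Fin n × Fin n) K)) (hI : I = Ideal.span (Set.range f))
    (hfh : ∀ i : Fin r, ∀ v : Matrix (Fin n) (Fin n) K, IsUnit v →
      v.det ^ l i * matEval v⁻¹ (f i) = matEval v (h i)) :
    (∀ v ∈ Vstar I, v⁻¹ ∈ Vstar I) ↔
      (∀ i : Fin r,
        MvPolynomial.rename (some : Fin n × Fin n → Option (Fin n × Fin n)) (h i) ∈
          (Ihat I).radical) :=
  stmt9_general r f h l I hI hfh
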